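/- arXiv:2006.16128 — 7 statements merged into one kernel-verified Lean document; each statement's English description precedes it below -/
import Mathlib

section
/- Let φ: ℝ^d → ℝ^n, f: ℝ^d × ℝ^l → ℝ^d, and let P, L_1,…,L_τ ∈ ℝ^{l×n} and T_1,…,T_{τ−1} ∈ ℝ^{l×l} be matrices. For x_0 ∈ ℝ^d and controls u_0,…,u_{i−1} ∈ ℝ^l define x_j = f(x_{j−1}, u_{j−1}) for j = 1,…,i. Suppose that for every i ∈ {1,…,τ}, every x_0 ∈ ℝ^d, and all controls u_0,…,u_{i−1}, it holds that P φ(x_i) = L_i φ(x_0) + Σ_{k=1}^{i−1} T_k u_{i−1−k} + u_{i−1}. Let V = col(Pᵀ) + col(L_1ᵀ) + ⋯ + col(L_{τ−1}ᵀ) ⊆ ℝ^n, assume col(L_τᵀ) ⊆ V, and let Q ∈ ℝ^{n×n} be the orthogonal projection onto V. Then there exist matrices A ∈ ℝ^{n×n} and B ∈ ℝ^{n×l} such that for every x ∈ ℝ^d and u ∈ ℝ^l, Q φ(f(x,u)) = A Q φ(x) + B u. -/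
/-!
Stack the readouts into `C = (P, L₁, …, L_{τ-1})`, the family `Function.update L 0 P`. Its kernel
is `Vᗮ`, which `Q` kills, so `Q = N ∘ C` for some linear `N`. Comparing the exactness identity at
horizon `k + 1` along the controls `u, 0, 0, …` with horizon `k` from `f x u` gives
`C φ(f x u) = D φ(x) + E u` with `D = (L₁, …, L_τ)` and `E = (I, T₁, …, T_{τ-1})`. Finally
`D ∘ Q = D`, because every row of every `Lᵢ` lies in `V` and `w - Q w ⊥ V`. Hence
`Q φ(f x u) = (N D) Q φ(x) + (N E) u`.
-/

open Matrix

theorem LinearMap.exists_comp_eq_of_ker_le {K M N R : Type*} [Field K] [AddCommGroup M]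
    [AddCommGroup N] [AddCommGroup R] [Module K M] [Module K N] [Module K R]
    (C : M →ₗ[K] N) (q : M →ₗ[K] R) (h : ker C ≤ ker q) : ∃ g : N →ₗ[K] R, g ∘ₗ C = q := by
  obtain ⟨g, hg⟩ := LinearMap.exists_extend
    ((ker C).liftQ q h ∘ₗ C.quotKerEquivRange.symm.toLinearMap)
  refine ⟨g, LinearMap.ext fun w => ?_⟩
  simpa [C.quotKerEquivRange_symm_apply_image w ⟨w, rfl⟩] using
    LinearMap.congr_fun hg ⟨C w, w, rfl⟩

theorem Submodule.exists_mem_le_ker_dotProductBilin_sub {ι : Type*} [Fintype ι]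
    (V : Submodule ℝ (ι → ℝ)) (w : ι → ℝ) :
    ∃ p ∈ V, V ≤ LinearMap.ker (dotProductBilin ℝ ℝ (w - p)) := by
  let K := V.comap (WithLp.linearEquiv 2 ℝ (ι → ℝ)).toLinearMap
  set p := K.starProjection (WithLp.toLp 2 w)
  refine ⟨p.ofLp, K.starProjection_apply_mem _, fun v hv => ?_⟩
  have h := K.sub_starProjection_mem_orthogonal (WithLp.toLp 2 w) (WithLp.toLp 2 v) hv
  rw [show WithLp.toLp 2 w - p = WithLp.toLp 2 (w - p.ofLp) from rfl,
    EuclideanSpace.inner_toLp_toLp] at h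
  simpa using h

namespace Matrix

theorem range_mulVecLin_transpose_le_ker_dotProductBilin_iff {R m ι : Type*}
    [CommRing R] [Fintype m] [DecidableEq m] [Fintype ι] (M : Matrix m ι R) (w : ι → R) :
    LinearMap.range Mᵀ.mulVecLin ≤ LinearMap.ker (dotProductBilin R R w) ↔ M *ᵥ w = 0 := by
  constructor
  · intro h
    funext j
    have hj := h ⟨Pi.single j 1, rfl⟩
    simp only [LinearMap.mem_ker, dotProductBilin_apply_apply, mulVecLin_apply,
      dotProduct_mulVec, vecMul_transpose, dotProduct_single, mul_one] at hj
    exact hj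
  · rintro h _ ⟨c, rfl⟩
    simp only [LinearMap.mem_ker, dotProductBilin_apply_apply, mulVecLin_apply]
    rw [dotProduct_mulVec, vecMul_transpose, h, zero_dotProduct]

section Projection

variable {ι : Type*} [Fintype ι] {V : Submodule ℝ (ι → ℝ)} {Q : Matrix ι ι ℝ}

theorem le_ker_dotProductBilin_sub_mulVec (hQ₁ : ∀ v ∈ V, Q *ᵥ v = v)
    (hQ₂ : ∀ w : ι → ℝ, (∀ v ∈ V, w ⬝ᵥ v = 0) → Q *ᵥ w = 0) (w : ι → ℝ) :
    V ≤ LinearMap.ker (dotProductBilin ℝ ℝ (w - Q *ᵥ w)) := by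
  obtain ⟨p, hpV, hperp⟩ := V.exists_mem_le_ker_dotProductBilin_sub w
  have hQw : Q *ᵥ w = p := by
    rw [← sub_add_cancel w p, mulVec_add, hQ₁ p hpV, hQ₂ _ fun v hv => hperp hv, zero_add]
  rwa [hQw]

theorem mulVec_mulVec_eq_of_range_transpose_le {m : Type*} [Fintype m] [DecidableEq m]
    (hQ₁ : ∀ v ∈ V, Q *ᵥ v = v) (hQ₂ : ∀ w : ι → ℝ, (∀ v ∈ V, w ⬝ᵥ v = 0) → Q *ᵥ w = 0)
    {M : Matrix m ι ℝ} (hM : LinearMap.range Mᵀ.mulVecLin ≤ V) (w : ι → ℝ) :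
    M *ᵥ (Q *ᵥ w) = M *ᵥ w := by
  have h := (range_mulVecLin_transpose_le_ker_dotProductBilin_iff M (w - Q *ᵥ w)).1
    (hM.trans (le_ker_dotProductBilin_sub_mulVec hQ₁ hQ₂ w))
  rw [mulVec_sub, sub_eq_zero] at h
  exact h.symm

end Projection

end Matrix

theorem sum_mulVec_single_zero_add {R m : Type*} [Semiring R] [Fintype m] [DecidableEq m]
    (T : ℕ → Matrix m m R) (u : m → R) (k : ℕ) :
    ∑ j ∈ Finset.Icc 1 k, T j *ᵥ (Pi.single 0 u : ℕ → m → R) (k - j) +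
        (Pi.single 0 u : ℕ → m → R) k =
      Function.update T 0 1 k *ᵥ u := by
  rcases Nat.eq_zero_or_pos k with rfl | hk₀
  · simp
  · rw [Finset.sum_eq_single_of_mem k (Finset.mem_Icc.2 ⟨hk₀, le_rfl⟩)]
    · simp [Function.update_of_ne hk₀.ne', Pi.single_eq_of_ne hk₀.ne']
    · intro j hj hjk
      have : k - j ≠ 0 := by grind
      simp [Pi.single_eq_of_ne this]

section Trajectory

variable {d n l τ : ℕ} {φ : (Fin d → ℝ) → (Fin n → ℝ)}
  {f : (Fin d → ℝ) → (Fin l → ℝ) → (Fin d → ℝ)} {P : Matrix (Fin l) (Fin n) ℝ}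
  {L : ℕ → Matrix (Fin l) (Fin n) ℝ} {T : ℕ → Matrix (Fin l) (Fin l) ℝ}
  {traj : (Fin d → ℝ) → (ℕ → Fin l → ℝ) → ℕ → (Fin d → ℝ)}

theorem traj_succ_single_zero (htraj0 : ∀ x u, traj x u 0 = x)
    (htrajS : ∀ x u j, traj x u (j + 1) = f (traj x u j) (u j))
    (x : Fin d → ℝ) (u : Fin l → ℝ) (k : ℕ) :
    traj x (Pi.single 0 u) (k + 1) = traj (f x u) 0 k := by
  induction k with
  | zero => simp [htrajS, htraj0]
  | succ k ih => rw [htrajS, ih, htrajS, Pi.single_eq_of_ne (Nat.succ_ne_zero k), Pi.zero_apply]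

theorem mulVec_traj_zero (htraj0 : ∀ x u, traj x u 0 = x)
    (hzero : ∀ i ∈ Finset.Icc 1 τ, ∀ (x0 : Fin d → ℝ) (u : ℕ → Fin l → ℝ),
      P.mulVec (φ (traj x0 u i)) =
        (L i).mulVec (φ x0) + (∑ k ∈ Finset.Icc 1 (i - 1), (T k).mulVec (u (i - 1 - k)))
          + u (i - 1))
    (y : Fin d → ℝ) {k : ℕ} (hk : k ≤ τ) :
    P *ᵥ φ (traj y 0 k) = Function.update L 0 P k *ᵥ φ y := by
  rcases Nat.eq_zero_or_pos k with rfl | hk₀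
  · simp [htraj0]
  · simpa [Function.update_of_ne hk₀.ne'] using hzero k (Finset.mem_Icc.2 ⟨hk₀, hk⟩) y 0

theorem mulVec_step (htraj0 : ∀ x u, traj x u 0 = x)
    (htrajS : ∀ x u j, traj x u (j + 1) = f (traj x u j) (u j))
    (hzero : ∀ i ∈ Finset.Icc 1 τ, ∀ (x0 : Fin d → ℝ) (u : ℕ → Fin l → ℝ),
      P.mulVec (φ (traj x0 u i)) =
        (L i).mulVec (φ x0) + (∑ k ∈ Finset.Icc 1 (i - 1), (T k).mulVec (u (i - 1 - k)))
          + u (i - 1))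
    (x : Fin d → ℝ) (u : Fin l → ℝ) {k : ℕ} (hk : k < τ) :
    Function.update L 0 P k *ᵥ φ (f x u) =
      L (k + 1) *ᵥ φ x + Function.update T 0 1 k *ᵥ u := by
  have h := hzero (k + 1) (Finset.mem_Icc.2 ⟨k.succ_pos, hk⟩) x (Pi.single 0 u)
  rw [Nat.add_sub_cancel, add_assoc, sum_mulVec_single_zero_add,
    traj_succ_single_zero htraj0 htrajS, mulVec_traj_zero htraj0 hzero _ hk.le] at h
  exact h

end Trajectory

section Readouts

variable {n l τ : ℕ} {P : Matrix (Fin l) (Fin n) ℝ} {L : ℕ → Matrix (Fin l) (Fin n) ℝ}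
  {V : Submodule ℝ (Fin n → ℝ)}

theorem range_mulVecLin_transpose_le_of_le
    (hV : V = LinearMap.range Pᵀ.mulVecLin ⊔
      ⨆ i ∈ Finset.Icc 1 (τ - 1), LinearMap.range (L i)ᵀ.mulVecLin)
    (hLτ : LinearMap.range (L τ)ᵀ.mulVecLin ≤ V) {k : ℕ} (hk₁ : 1 ≤ k) (hk : k ≤ τ) :
    LinearMap.range (L k)ᵀ.mulVecLin ≤ V := by
  rcases hk.eq_or_lt with rfl | hk
  · exact hLτ
  · rw [hV]
    exact le_sup_of_le_right <| le_iSup₂_of_le (f := fun i _ => LinearMap.range (L i)ᵀ.mulVecLin)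
      k (Finset.mem_Icc.2 ⟨hk₁, by omega⟩) le_rfl

theorem ker_pi_mulVecLin_update_le_ker (hτ : 1 ≤ τ)
    (hV : V = LinearMap.range Pᵀ.mulVecLin ⊔
      ⨆ i ∈ Finset.Icc 1 (τ - 1), LinearMap.range (L i)ᵀ.mulVecLin)
    {Q : Matrix (Fin n) (Fin n) ℝ}
    (hQ₂ : ∀ w : Fin n → ℝ, (∀ v ∈ V, w ⬝ᵥ v = 0) → Q *ᵥ w = 0) :
    LinearMap.ker (LinearMap.pi fun i : Fin τ => (Function.update L 0 P i).mulVecLin) ≤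
      LinearMap.ker Q.mulVecLin := by
  intro w hw
  have hrows (i : Fin τ) : Function.update L 0 P i *ᵥ w = 0 := congrFun hw i
  suffices hVw : V ≤ LinearMap.ker (dotProductBilin ℝ ℝ w) from hQ₂ w fun v hv => hVw hv
  rw [hV]
  refine sup_le ?_ (iSup₂_le fun i hi => ?_)
  · simpa using (range_mulVecLin_transpose_le_ker_dotProductBilin_iff P w).2 (hrows ⟨0, hτ⟩)
  · have hi' := Finset.mem_Icc.1 hi
    have hLi : Function.update L 0 P i *ᵥ w = 0 := hrows ⟨i, by omega⟩
    rw [Function.update_of_ne (show i ≠ 0 by omega)] at hLi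
    exact (range_mulVecLin_transpose_le_ker_dotProductBilin_iff (L i) w).2 hLi

end Readouts

/-- Nonlinear state representation: if the inverse model built on a representation `φ` is exact
(zero loss) for all horizons `i = 1,…,τ`, the subspace
`V = col(Pᵀ) + col(L₁ᵀ) + ⋯ + col(L_{τ−1}ᵀ)` contains `col(L_τᵀ)`, and `Q` is the orthogonal
projection onto `V`, then there exist `A`, `B` such that
`Q φ(f(x,u)) = A Q φ(x) + B u` for all `x`, `u`. -/
theorem stmt_2 (d n l τ : ℕ) (hτ : 1 ≤ τ)
    (φ : (Fin d → ℝ) → (Fin n → ℝ))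
    (f : (Fin d → ℝ) → (Fin l → ℝ) → (Fin d → ℝ))
    (P : Matrix (Fin l) (Fin n) ℝ)
    (L : ℕ → Matrix (Fin l) (Fin n) ℝ)
    (T : ℕ → Matrix (Fin l) (Fin l) ℝ)
    -- traj x u j is the state after j steps of f starting from x along controls u
    (traj : (Fin d → ℝ) → (ℕ → Fin l → ℝ) → ℕ → (Fin d → ℝ))
    (htraj0 : ∀ x u, traj x u 0 = x)
    (htrajS : ∀ x u j, traj x u (j + 1) = f (traj x u j) (u j))
    -- exact inverse model for every horizon i = 1,…,τ, every initial state and all controls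
    (hzero : ∀ i ∈ Finset.Icc 1 τ, ∀ (x0 : Fin d → ℝ) (u : ℕ → Fin l → ℝ),
      P.mulVec (φ (traj x0 u i)) =
        (L i).mulVec (φ x0) + (∑ k ∈ Finset.Icc 1 (i - 1), (T k).mulVec (u (i - 1 - k)))
          + u (i - 1))
    -- V = col(Pᵀ) + col(L₁ᵀ) + ⋯ + col(L_{τ−1}ᵀ)
    (V : Submodule ℝ (Fin n → ℝ))
    (hV : V = LinearMap.range Pᵀ.mulVecLin ⊔
      ⨆ i ∈ Finset.Icc 1 (τ - 1), LinearMap.range (L i)ᵀ.mulVecLin)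
    (hLτ : LinearMap.range (L τ)ᵀ.mulVecLin ≤ V)
    -- Q is the orthogonal projection onto V
    (Q : Matrix (Fin n) (Fin n) ℝ)
    (hQ1 : ∀ v ∈ V, Q.mulVec v = v)
    (hQ2 : ∀ w : Fin n → ℝ, (∀ v ∈ V, w ⬝ᵥ v = 0) → Q.mulVec w = 0) :
    ∃ (A : Matrix (Fin n) (Fin n) ℝ) (B : Matrix (Fin n) (Fin l) ℝ),
      ∀ (x : Fin d → ℝ) (u : Fin l → ℝ),
        Q.mulVec (φ (f x u)) = A.mulVec (Q.mulVec (φ x)) + B.mulVec u := by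
  let C := LinearMap.pi fun i : Fin τ => (Function.update L 0 P i).mulVecLin
  let D := LinearMap.pi fun i : Fin τ => (L (i + 1)).mulVecLin
  let E := LinearMap.pi fun i : Fin τ => (Function.update T 0 1 i).mulVecLin
  obtain ⟨N, hN⟩ := LinearMap.exists_comp_eq_of_ker_le C Q.mulVecLin
    (ker_pi_mulVecLin_update_le_ker hτ hV hQ2)
  have hstep (x u) : C (φ (f x u)) = D (φ x) + E u :=
    funext fun i => mulVec_step htraj0 htrajS hzero x u i.isLt
  have hDQ (w) : D (Q *ᵥ w) = D w := funext fun i =>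
    mulVec_mulVec_eq_of_range_transpose_le hQ1 hQ2
      (range_mulVecLin_transpose_le_of_le hV hLτ i.succ_pos i.isLt) w
  refine ⟨LinearMap.toMatrix' (N ∘ₗ D), LinearMap.toMatrix' (N ∘ₗ E), fun x u => ?_⟩
  calc Q *ᵥ φ (f x u) = N (C (φ (f x u))) := by rw [← LinearMap.comp_apply, hN, mulVecLin_apply]
    _ = N (D (Q *ᵥ φ x)) + N (E u) := by rw [hstep, map_add, hDQ]
    _ = _ := by simp only [LinearMap.toMatrix'_mulVec, LinearMap.comp_apply]
end

section
/- For any real matrix A, the minimal nonzero singular value of A⁺ + Aᵀ is at least 2; equivalently, ‖(A⁺ + Aᵀ)v‖ ≥ 2‖v‖ for every vector v orthogonal to the kernel of A⁺ + Aᵀ. -/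
/-!
With `P = A A⁺`, the orthogonal projection onto the range of `A`, the Moore–Penrose identities
give `(A⁺ + Aᵀ) P = A⁺ + Aᵀ`. Hence `(1 - P) w` lies in the kernel of `A⁺ + Aᵀ` for every `w`, so a
vector `v` orthogonal to that kernel satisfies `P v = v`. For such `v`,
`⟪A⁺ v, Aᵀ v⟫ = ⟪P v, v⟫ = ‖v‖²`, and `‖x + y‖² ≥ 4 ⟪x, y⟫` with `x = A⁺ v`, `y = Aᵀ v`
gives `‖(A⁺ + Aᵀ) v‖ ≥ 2 ‖v‖`.
-/

open MeasureTheory ProbabilityTheory Matrix Finset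

noncomputable section

/-- The four Moore–Penrose conditions characterizing the pseudoinverse. -/
def IsMoorePenrose {m n : Type*} [Fintype m] [Fintype n]
    (A : Matrix m n ℝ) (B : Matrix n m ℝ) : Prop :=
  A * B * A = A ∧ B * A * B = B ∧ (A * B)ᵀ = A * B ∧ (B * A)ᵀ = B * A

/-- Euclidean norm of a finite-dimensional real vector. -/
def eNorm {ι : Type*} [Fintype ι] (v : ι → ℝ) : ℝ := Real.sqrt (v ⬝ᵥ v)

section

variable {m n R : Type*} [Fintype m]

theorem mulVec_dotProduct_transpose_mulVec [Fintype n] [CommSemiring R] (A : Matrix m n R)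
    (B : Matrix n m R) (v : m → R) : B *ᵥ v ⬝ᵥ Aᵀ *ᵥ v = (A * B) *ᵥ v ⬝ᵥ v := by
  rw [dotProduct_mulVec, vecMul_transpose, mulVec_mulVec]

variable [CommRing R] [LinearOrder R] [IsStrictOrderedRing R]

theorem four_mul_dotProduct_le_dotProduct_add_self (x y : m → R) :
    4 * (x ⬝ᵥ y) ≤ (x + y) ⬝ᵥ (x + y) := by
  have hsq : 0 ≤ (x - y) ⬝ᵥ (x - y) := Finset.sum_nonneg fun _ _ => mul_self_nonneg _
  have hexpand : (x + y) ⬝ᵥ (x + y) = (x - y) ⬝ᵥ (x - y) + 4 * (x ⬝ᵥ y) := by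
    simp only [add_dotProduct, dotProduct_add, sub_dotProduct, dotProduct_sub, dotProduct_comm y x]
    ring
  linarith

theorem mulVec_eq_self_of_forall_mulVec_eq_zero {P : Matrix m m R} (hPsymm : Pᵀ = P)
    (hPidem : P * P = P) {M : Matrix n m R} (hMP : M * P = M) {v : m → R}
    (hv : ∀ w, M *ᵥ w = 0 → v ⬝ᵥ w = 0) : P *ᵥ v = v := by
  set u := v - P *ᵥ v with hu
  have hMu : M *ᵥ u = 0 := by rw [mulVec_sub, mulVec_mulVec, hMP, sub_self]
  have hPu : P *ᵥ u = 0 := by rw [mulVec_sub, mulVec_mulVec, hPidem, sub_self]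
  have hPv_u : P *ᵥ v ⬝ᵥ u = 0 := by
    rw [dotProduct_comm, dotProduct_mulVec, ← mulVec_transpose, hPsymm, hPu, zero_dotProduct]
  have huu : u ⬝ᵥ u = 0 := by
    conv_lhs => rw [hu, sub_dotProduct]
    rw [hv u hMu, hPv_u, sub_zero]
  exact (sub_eq_zero.mp (dotProduct_self_eq_zero.mp huu)).symm

end

namespace IsMoorePenrose

variable {m n : Type*} [Fintype m] [Fintype n] {A : Matrix m n ℝ} {B : Matrix n m ℝ}

theorem mul_mul_self (h : IsMoorePenrose A B) : A * B * (A * B) = A * B := by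
  rw [Matrix.mul_assoc, ← Matrix.mul_assoc B, h.2.1]

theorem add_transpose_mul_mul (h : IsMoorePenrose A B) : (B + Aᵀ) * (A * B) = B + Aᵀ := by
  rw [Matrix.add_mul, ← Matrix.mul_assoc, h.2.1, ← h.2.2.1, ← transpose_mul, h.1]

end IsMoorePenrose

theorem two_mul_eNorm_le_of_four_mul_dotProduct_le {ι κ : Type*} [Fintype ι] [Fintype κ]
    {v : ι → ℝ} {w : κ → ℝ} (h : 4 * (v ⬝ᵥ v) ≤ w ⬝ᵥ w) : 2 * eNorm v ≤ eNorm w := by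
  have htwo : (2 : ℝ) = Real.sqrt 4 := by
    rw [show (4 : ℝ) = 2 ^ 2 by norm_num, Real.sqrt_sq zero_le_two]
  rw [eNorm, eNorm, htwo, ← Real.sqrt_mul zero_le_four]
  exact Real.sqrt_le_sqrt h

/-- For any real matrix `A`, the minimal nonzero singular value of `A⁺ + Aᵀ` is at least 2:
equivalently (and this is the form stated here), `‖(A⁺ + Aᵀ) v‖ ≥ 2 ‖v‖` for every vector `v`
orthogonal to the kernel of `A⁺ + Aᵀ`. -/
theorem stmt_6 (m n : ℕ) (A : Matrix (Fin m) (Fin n) ℝ)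
    (Ap : Matrix (Fin n) (Fin m) ℝ) (hAp : IsMoorePenrose A Ap) :
    ∀ v : Fin m → ℝ,
      (∀ w : Fin m → ℝ, (Ap + Aᵀ).mulVec w = 0 → v ⬝ᵥ w = 0) →
      2 * eNorm v ≤ eNorm ((Ap + Aᵀ).mulVec v) := by
  intro v hv
  have hPv : (A * Ap) *ᵥ v = v :=
    mulVec_eq_self_of_forall_mulVec_eq_zero hAp.2.2.1 hAp.mul_mul_self
      hAp.add_transpose_mul_mul hv
  apply two_mul_eNorm_le_of_four_mul_dotProduct_le
  calc 4 * (v ⬝ᵥ v) = 4 * (Ap *ᵥ v ⬝ᵥ Aᵀ *ᵥ v) := by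
        rw [mulVec_dotProduct_transpose_mulVec, hPv]
    _ ≤ (Ap *ᵥ v + Aᵀ *ᵥ v) ⬝ᵥ (Ap *ᵥ v + Aᵀ *ᵥ v) :=
        four_mul_dotProduct_le_dotProduct_add_self _ _
    _ = (Ap + Aᵀ) *ᵥ v ⬝ᵥ (Ap + Aᵀ) *ᵥ v := by rw [add_mulVec]
end
end

section
/- Let A ∈ ℝ^{m×p}, B ∈ ℝ^{m×q}, and c ∈ ℝ^m, and assume there exist x, y with Ax + By = c. Let P_B denote the orthogonal projection onto col(B). Define x* = ((I − P_B)A)⁺ (I − P_B)c (the minimal-norm least squares solution of min_x ‖(I−P_B)Ax − (I−P_B)c‖²) and y* = B⁺(P_B c − P_B A x*) (the minimal-norm least squares solution of min_y ‖By − P_B c + P_B A x*‖²). Then Ax* + By* = c, and for every pair (x', y') with Ax' + By' = c: ‖x*‖ ≤ ‖x'‖, and if ‖x*‖ = ‖x'‖ then x* = x' and ‖y*‖ ≤ ‖y'‖. -/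
/-!
The orthogonal projection onto `col(B)` is `P = B B⁺`, so `A x + B y = c` holds exactly when
`(I − P) A x = (I − P) c` and `B y = P (c − A x)`. Hence for every feasible `(x', y')` the vector
`x*` is `M⁺ M x'` with `M = (I − P) A`, and `y*` is `B⁺ B y'` as soon as `x* = x'`. Both `M⁺ M` and
`B⁺ B` are symmetric idempotents, i.e. orthogonal projections, which can only shorten a vector
and fix it when they preserve its norm.
-/

open MeasureTheory ProbabilityTheory Matrix Finset

noncomputable section

section OrthogonalProjection

variable {n : Type*} [Fintype n] {P : Matrix n n ℝ}

lemma mulVec_dotProduct_sub_mulVec_eq_zero (hP : P * P = P) (hPt : Pᵀ = P) (u w : n → ℝ) :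
    (P *ᵥ u) ⬝ᵥ (w - P *ᵥ w) = 0 := by
  rw [← hPt, mulVec_transpose, ← dotProduct_mulVec, hPt, mulVec_sub, mulVec_mulVec, hP,
    sub_self, dotProduct_zero]

lemma dotProduct_self_eq_add_of_mul_self (hP : P * P = P) (hPt : Pᵀ = P) (x : n → ℝ) :
    x ⬝ᵥ x = (P *ᵥ x) ⬝ᵥ (P *ᵥ x) + (x - P *ᵥ x) ⬝ᵥ (x - P *ᵥ x) := by
  have horth := mulVec_dotProduct_sub_mulVec_eq_zero hP hPt x x
  calc x ⬝ᵥ x = (P *ᵥ x + (x - P *ᵥ x)) ⬝ᵥ (P *ᵥ x + (x - P *ᵥ x)) := by rw [add_sub_cancel]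
    _ = _ := by
      rw [add_dotProduct, dotProduct_add, dotProduct_add, dotProduct_comm (x - _), horth]
      ring

lemma eNorm_mulVec_le_of_mul_self (hP : P * P = P) (hPt : Pᵀ = P) (x : n → ℝ) :
    eNorm (P *ᵥ x) ≤ eNorm x := by
  have hx := dotProduct_self_eq_add_of_mul_self hP hPt x
  have hnonneg : 0 ≤ (x - P *ᵥ x) ⬝ᵥ (x - P *ᵥ x) := by
    simpa using dotProduct_star_self_nonneg (x - P *ᵥ x)
  exact Real.sqrt_le_sqrt (by linarith)

lemma mulVec_eq_self_of_eNorm_eq (hP : P * P = P) (hPt : Pᵀ = P) {x : n → ℝ}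
    (h : eNorm (P *ᵥ x) = eNorm x) : P *ᵥ x = x := by
  have hx := dotProduct_self_eq_add_of_mul_self hP hPt x
  have hsq : (P *ᵥ x) ⬝ᵥ (P *ᵥ x) = x ⬝ᵥ x := by
    rwa [eNorm, eNorm, Real.sqrt_inj (by simpa using dotProduct_star_self_nonneg (P *ᵥ x))
      (by simpa using dotProduct_star_self_nonneg x)] at h
  have hzero : (x - P *ᵥ x) ⬝ᵥ (x - P *ᵥ x) = 0 := by linarith
  exact (sub_eq_zero.mp (dotProduct_self_eq_zero.mp hzero)).symm

end OrthogonalProjection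

namespace IsMoorePenrose

variable {k n : Type*} [Fintype k] [Fintype n] {M : Matrix k n ℝ} {Mp : Matrix n k ℝ}

lemma mul_mul_self_left (h : IsMoorePenrose M Mp) : Mp * M * (Mp * M) = Mp * M := by
  rw [← Matrix.mul_assoc, h.2.1]

lemma mul_mul_self_right (h : IsMoorePenrose M Mp) : M * Mp * (M * Mp) = M * Mp := by
  rw [← Matrix.mul_assoc, h.1]

lemma eNorm_mul_mulVec_le (h : IsMoorePenrose M Mp) (x : n → ℝ) :
    eNorm ((Mp * M) *ᵥ x) ≤ eNorm x :=
  eNorm_mulVec_le_of_mul_self h.mul_mul_self_left h.2.2.2 x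

lemma mul_mulVec_eq_self_of_eNorm_eq (h : IsMoorePenrose M Mp) {x : n → ℝ}
    (hx : eNorm ((Mp * M) *ᵥ x) = eNorm x) : (Mp * M) *ᵥ x = x :=
  mulVec_eq_self_of_eNorm_eq h.mul_mul_self_left h.2.2.2 hx

lemma orthProj_range_eq_mul (h : IsMoorePenrose M Mp) {P : Matrix k k ℝ}
    (hfix : ∀ v ∈ LinearMap.range M.mulVecLin, P *ᵥ v = v)
    (hker : ∀ w, (∀ v ∈ LinearMap.range M.mulVecLin, w ⬝ᵥ v = 0) → P *ᵥ w = 0) :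
    P = M * Mp := by
  refine ext_iff_mulVec.mpr fun v => ?_
  have hcol : P *ᵥ ((M * Mp) *ᵥ v) = (M * Mp) *ᵥ v :=
    hfix _ ⟨Mp *ᵥ v, by rw [mulVecLin_apply, mulVec_mulVec]⟩
  have hperp : P *ᵥ (v - (M * Mp) *ᵥ v) = 0 := by
    refine hker _ ?_
    rintro - ⟨y, rfl⟩
    have hy : M *ᵥ y = (M * Mp) *ᵥ (M *ᵥ y) := by rw [mulVec_mulVec, h.1]
    rw [mulVecLin_apply, hy, dotProduct_comm]
    exact mulVec_dotProduct_sub_mulVec_eq_zero h.mul_mul_self_right h.2.2.1 _ v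
  calc P *ᵥ v = P *ᵥ ((M * Mp) *ᵥ v) + P *ᵥ (v - (M * Mp) *ᵥ v) := by
        rw [← mulVec_add, add_sub_cancel]
    _ = (M * Mp) *ᵥ v := by rw [hcol, hperp, add_zero]

end IsMoorePenrose

/-- Two-stage construction of the solution of `min ‖Ax + By − c‖` that has lexicographically
minimal norms `(‖x‖, ‖y‖)`:  `x* = ((I − P_B)A)⁺ (I − P_B)c` and
`y* = B⁺ (P_B c − P_B A x*)`, where `P_B` is the orthogonal projection onto `col(B)`.
Then `A x* + B y* = c`, and for every pair `(x', y')` with `A x' + B y' = c` we have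
`‖x*‖ ≤ ‖x'‖`, and if `‖x*‖ = ‖x'‖` then `x* = x'` and `‖y*‖ ≤ ‖y'‖`. -/
theorem stmt_7 (m p q : ℕ)
    (A : Matrix (Fin m) (Fin p) ℝ) (B : Matrix (Fin m) (Fin q) ℝ) (c : Fin m → ℝ)
    (hex : ∃ (x : Fin p → ℝ) (y : Fin q → ℝ), A.mulVec x + B.mulVec y = c)
    -- P_B is the orthogonal projection onto the column span of B
    (PB : Matrix (Fin m) (Fin m) ℝ)
    (hPB1 : ∀ v ∈ LinearMap.range B.mulVecLin, PB.mulVec v = v)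
    (hPB2 : ∀ w : Fin m → ℝ, (∀ v ∈ LinearMap.range B.mulVecLin, w ⬝ᵥ v = 0) →
      PB.mulVec w = 0)
    -- pseudoinverses
    (Mp : Matrix (Fin p) (Fin m) ℝ) (hMp : IsMoorePenrose ((1 - PB) * A) Mp)
    (Bp : Matrix (Fin q) (Fin m) ℝ) (hBp : IsMoorePenrose B Bp)
    -- the two-stage minimal-norm least squares solutions
    (xs : Fin p → ℝ) (hxs : xs = Mp.mulVec ((1 - PB).mulVec c))
    (ys : Fin q → ℝ) (hys : ys = Bp.mulVec (PB.mulVec c - PB.mulVec (A.mulVec xs))) :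
    A.mulVec xs + B.mulVec ys = c ∧
    ∀ (x' : Fin p → ℝ) (y' : Fin q → ℝ), A.mulVec x' + B.mulVec y' = c →
      eNorm xs ≤ eNorm x' ∧ (eNorm xs = eNorm x' → xs = x' ∧ eNorm ys ≤ eNorm y') := by
  obtain rfl : PB = B * Bp := hBp.orthProj_range_eq_mul hPB1 hPB2
  have hfixB : ∀ y, (B * Bp) *ᵥ (B *ᵥ y) = B *ᵥ y := fun y => by rw [mulVec_mulVec, hBp.1]
  have hred : ∀ x y, A *ᵥ x + B *ᵥ y = c → ((1 - B * Bp) * A) *ᵥ x = (1 - B * Bp) *ᵥ c := by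
    rintro x y rfl
    rw [mulVec_add, sub_mulVec 1 _ (B *ᵥ y), one_mulVec, hfixB, sub_self, add_zero, mulVec_mulVec]
  have hxs_proj : ∀ x y, A *ᵥ x + B *ᵥ y = c → xs = (Mp * ((1 - B * Bp) * A)) *ᵥ x := by
    intro x y h
    rw [hxs, ← hred x y h, mulVec_mulVec]
  have hfeas : A *ᵥ xs + B *ᵥ ys = c := by
    obtain ⟨x₀, y₀, h₀⟩ := hex
    have hMxs : ((1 - B * Bp) * A) *ᵥ xs = (1 - B * Bp) *ᵥ c := by
      rw [hxs_proj x₀ y₀ h₀, mulVec_mulVec, ← Matrix.mul_assoc, hMp.1, hred x₀ y₀ h₀]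
    rw [← mulVec_mulVec, sub_mulVec, sub_mulVec, one_mulVec, one_mulVec] at hMxs
    rw [hys, ← mulVec_sub, mulVec_mulVec, mulVec_mulVec, hBp.mul_mul_self_right, mulVec_sub]
    linear_combination (norm := module) hMxs
  refine ⟨hfeas, fun x' y' h' => ⟨?_, fun hnorm => ?_⟩⟩
  · exact hxs_proj x' y' h' ▸ hMp.eNorm_mul_mulVec_le x'
  have hx : xs = x' := by
    rw [hxs_proj x' y' h'] at hnorm ⊢
    exact hMp.mul_mulVec_eq_self_of_eNorm_eq hnorm
  have hy : ys = (Bp * B) *ᵥ y' := by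
    have hBy' : c - A *ᵥ xs = B *ᵥ y' := by rw [hx, ← h', add_sub_cancel_left]
    rw [hys, ← mulVec_sub, hBy', hfixB, mulVec_mulVec]
  exact ⟨hx, hy ▸ hBp.eNorm_mul_mulVec_le y'⟩
end
end

section
/- Let f: ℝ^n × ℝ^l → ℝ^n, fix i ≥ 2, and let P, L_{i−1}, L_i ∈ ℝ^{l×n} and T_1,…,T_{i−1} ∈ ℝ^{l×l} be matrices. For x ∈ ℝ^n and controls u_0,…,u_{j−1} ∈ ℝ^l, let F_j(x; u_0,…,u_{j−1}) denote the state obtained by iterating f, i.e. F_0 = x and F_{k+1} = f(F_k, u_k). Suppose that for all x and all controls: P F_{i−1}(x; u_0,…,u_{i−2}) = L_{i−1} x + Σ_{k=1}^{i−2} T_k u_{i−2−k} + u_{i−2} and P F_i(x; u_0,…,u_{i−1}) = L_i x + Σ_{k=1}^{i−1} T_k u_{i−1−k} + u_{i−1}. Then for every x ∈ ℝ^n and u ∈ ℝ^l, L_{i−1} f(x, u) = L_i x + T_{i−1} u. -/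
open Matrix Finset

/-!
Feed the impulse control `u, 0, 0, …` from `x`. After one step the state is `f x u` and all
remaining controls vanish, so the horizon-`i` identity at `x` and the horizon-`(i-1)` identity
at `f x u` describe the same quantity `P F_i`. With zero controls the latter is just
`L_{i-1} f(x, u)`, while in the former the impulse survives only in the term `T_{i-1} u`.
-/

section Iterate

variable {α β : Type*} {f : α → β → α} {F : α → (ℕ → β) → ℕ → α}

theorem iter_succ_eq_iter_tail (hF0 : ∀ x u, F x u 0 = x)
    (hFS : ∀ x u k, F x u (k + 1) = f (F x u k) (u k)) (j : ℕ) (x : α) (v : ℕ → β) :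
    F x v (j + 1) = F (f x (v 0)) (fun k => v (k + 1)) j := by
  induction j generalizing x v with
  | zero => rw [hFS, hF0, hF0]
  | succ j ih => rw [hFS, ih, hFS]

theorem iter_single_succ [Zero β] (hF0 : ∀ x u, F x u 0 = x)
    (hFS : ∀ x u k, F x u (k + 1) = f (F x u k) (u k)) (j : ℕ) (x : α) (u : β) :
    F x (Pi.single 0 u) (j + 1) = F (f x u) 0 j := by
  have tail : (fun k => (Pi.single 0 u : ℕ → β) (k + 1)) = 0 :=
    funext fun k => Pi.single_eq_of_ne k.succ_ne_zero u
  rw [iter_succ_eq_iter_tail hF0 hFS, Pi.single_eq_same, tail]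

end Iterate

theorem sum_Icc_mulVec_single_sub {ι R : Type*} [Fintype ι] [NonUnitalNonAssocSemiring R]
    (T : ℕ → Matrix ι ι R) (u : ι → R) {m : ℕ} (hm : 1 ≤ m) :
    ∑ k ∈ Icc 1 m, T k *ᵥ (Pi.single 0 u : ℕ → ι → R) (m - k) = T m *ᵥ u := by
  rw [Finset.sum_eq_single_of_mem m (mem_Icc.mpr ⟨hm, le_rfl⟩)]
  · rw [Nat.sub_self, Pi.single_eq_same]
  · intro k hk hkm
    have : m - k ≠ 0 := by grind
    rw [Pi.single_eq_of_ne this, mulVec_zero]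

/-- If the inverse model is exact at horizons `i−1` and `i` (with coupled matrices `T_k`),
then `L_{i−1} f(x, u) = L_i x + T_{i−1} u` for every state `x` and control `u`. -/
theorem stmt_8 (n l i : ℕ) (hi : 2 ≤ i)
    (f : (Fin n → ℝ) → (Fin l → ℝ) → (Fin n → ℝ))
    (P Lim1 Li : Matrix (Fin l) (Fin n) ℝ)
    (T : ℕ → Matrix (Fin l) (Fin l) ℝ)
    -- F x u j is the j-fold iterate of f starting at x along the control sequence u
    (F : (Fin n → ℝ) → (ℕ → Fin l → ℝ) → ℕ → (Fin n → ℝ))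
    (hF0 : ∀ x u, F x u 0 = x)
    (hFS : ∀ x u k, F x u (k + 1) = f (F x u k) (u k))
    -- the two inverse-model identities, at horizons i−1 and i
    (h1 : ∀ (x : Fin n → ℝ) (u : ℕ → Fin l → ℝ),
      P.mulVec (F x u (i - 1)) =
        Lim1.mulVec x + (∑ k ∈ Finset.Icc 1 (i - 2), (T k).mulVec (u (i - 2 - k))) + u (i - 2))
    (h2 : ∀ (x : Fin n → ℝ) (u : ℕ → Fin l → ℝ),
      P.mulVec (F x u i) =
        Li.mulVec x + (∑ k ∈ Finset.Icc 1 (i - 1), (T k).mulVec (u (i - 1 - k))) + u (i - 1)) :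
    ∀ (x : Fin n → ℝ) (u : Fin l → ℝ),
      Lim1.mulVec (f x u) = Li.mulVec x + (T (i - 1)).mulVec u := by
  intro x u
  have hstate : F x (Pi.single 0 u) i = F (f x u) 0 (i - 1) := by
    obtain ⟨j, rfl⟩ : ∃ j, i = j + 1 := ⟨i - 1, by omega⟩
    exact iter_single_succ hF0 hFS j x u
  have after_impulse := h1 (f x u) 0
  simp only [Pi.zero_apply, mulVec_zero, sum_const_zero, add_zero] at after_impulse
  have with_impulse := h2 x (Pi.single 0 u)
  rw [hstate, after_impulse, sum_Icc_mulVec_single_sub T u (by omega),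
    Pi.single_eq_of_ne (by omega), add_zero] at with_impulse
  exact with_impulse
end

section
/- Let B ∈ ℝ^{d×l} have rank l, let Σ_{uu} ∈ ℝ^{l×l} be symmetric positive definite, let Σ_{uz} ∈ ℝ^{l×d} with Σ_{zu} := Σ_{uz}ᵀ, let Σ_{zz} ∈ ℝ^{d×d}, let σ ∈ ℝ, and let P_1, P_2 ∈ ℝ^{d×l}. Suppose 0 = B Σ_{uu}(Bᵀ P_1 − I) + B Σ_{uz} P_2 + σ² P_1 and 0 = Σ_{zu}(Bᵀ P_1 − I) + Σ_{zz} P_2 + σ² P_2. Then (σ² I + Σ_{zz} − Σ_{zu} Σ_{uu}^{−1} Σ_{uz}) P_2 = σ² Σ_{zu} (B Σ_{uu})⁺ P_1. -/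
/-!
Since `B Σ_uu` has full column rank, the first Moore–Penrose condition already makes `M` a left
inverse of it, so `Σ_uu⁻¹ = M B`. Multiplying the first optimality condition by `M` solves it
for `Bᵀ P₁ - 1 = -Σ_uu⁻¹ Σ_uz P₂ - σ² M P₁`, and substituting this into the second one gives
the claim.
-/

open MeasureTheory ProbabilityTheory Matrix Finset

noncomputable section

theorem Matrix.mul_eq_one_of_mul_mul_eq_self {K : Type*} [Field K] {m n : Type*} [Fintype m]
    [Fintype n] [DecidableEq n] {A : Matrix m n K} {M : Matrix n m K}
    (hA : A.rank = Fintype.card n) (h : A * M * A = A) : M * A = 1 := by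
  have hinj : Function.Injective A.mulVec := by
    rw [mulVec_injective_iff, linearIndependent_iff_card_eq_finrank_span, ← hA,
      rank_eq_finrank_span_cols, Set.finrank]
  refine ext_iff_mulVec.mpr fun v => hinj ?_
  rw [mulVec_mulVec, ← Matrix.mul_assoc, h, one_mulVec]

theorem stmt_13_general (d l : ℕ)
    (B : Matrix (Fin d) (Fin l) ℝ) (hB : B.rank = l)
    (Suu : Matrix (Fin l) (Fin l) ℝ) (hSuu : Suu.PosDef)
    (Suz : Matrix (Fin l) (Fin d) ℝ) (Szu : Matrix (Fin d) (Fin l) ℝ)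
    (Szz : Matrix (Fin d) (Fin d) ℝ) (σ : ℝ)
    (P1 P2 : Matrix (Fin d) (Fin l) ℝ)
    (hopt1 : 0 = B * Suu * (Bᵀ * P1 - 1) + B * Suz * P2 + σ ^ 2 • P1)
    (hopt2 : 0 = Szu * (Bᵀ * P1 - 1) + Szz * P2 + σ ^ 2 • P2)
    (Mp : Matrix (Fin l) (Fin d) ℝ) (hMp : IsMoorePenrose (B * Suu) Mp) :
    (σ ^ 2 • (1 : Matrix (Fin d) (Fin d) ℝ) + Szz - Szu * Suu⁻¹ * Suz) * P2
      = σ ^ 2 • (Szu * Mp * P1) := by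
  have hrank : (B * Suu).rank = Fintype.card (Fin l) := by
    rw [rank_mul_eq_left_of_isUnit_det Suu B ((isUnit_iff_isUnit_det Suu).mp hSuu.isUnit), hB,
      Fintype.card_fin]
  have hleft : Mp * (B * Suu) = 1 := mul_eq_one_of_mul_mul_eq_self hrank hMp.1
  have hinv : Suu⁻¹ = Mp * B := inv_eq_left_inv (by rw [Matrix.mul_assoc, hleft])
  have hsolve : Bᵀ * P1 - 1 = -(Suu⁻¹ * Suz * P2) - σ ^ 2 • (Mp * P1) := by
    have h := congrArg (Mp * ·) hopt1
    simp only [Matrix.mul_zero, Matrix.mul_add, Matrix.mul_smul] at h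
    rw [← Matrix.mul_assoc, hleft, Matrix.one_mul, ← Matrix.mul_assoc, ← Matrix.mul_assoc,
      ← hinv] at h
    linear_combination (norm := abel) -h
  rw [hsolve, Matrix.mul_sub, Matrix.mul_neg, Matrix.mul_smul] at hopt2
  simp only [Matrix.sub_mul, Matrix.add_mul, Matrix.smul_mul, Matrix.one_mul, Matrix.mul_assoc]
    at hopt2 ⊢
  linear_combination (norm := abel) -hopt2

/-- Combining the two optimality conditions of the noisy inverse-model regression yields
`(σ²I + Σ_zz − Σ_zu Σ_uu⁻¹ Σ_uz) P₂ = σ² Σ_zu (B Σ_uu)⁺ P₁`. -/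
theorem stmt_13 (d l : ℕ)
    (B : Matrix (Fin d) (Fin l) ℝ) (hB : B.rank = l)
    (Suu : Matrix (Fin l) (Fin l) ℝ) (hSuu : Suu.PosDef)
    (Suz : Matrix (Fin l) (Fin d) ℝ) (Szu : Matrix (Fin d) (Fin l) ℝ) (hSzu : Szu = Suzᵀ)
    (Szz : Matrix (Fin d) (Fin d) ℝ) (σ : ℝ)
    (P1 P2 : Matrix (Fin d) (Fin l) ℝ)
    (hopt1 : 0 = B * Suu * (Bᵀ * P1 - 1) + B * Suz * P2 + σ ^ 2 • P1)
    (hopt2 : 0 = Szu * (Bᵀ * P1 - 1) + Szz * P2 + σ ^ 2 • P2)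
    (Mp : Matrix (Fin l) (Fin d) ℝ) (hMp : IsMoorePenrose (B * Suu) Mp) :
    (σ ^ 2 • (1 : Matrix (Fin d) (Fin d) ℝ) + Szz - Szu * Suu⁻¹ * Suz) * P2
      = σ ^ 2 • (Szu * Mp * P1) :=
  stmt_13_general d l B hB Suu hSuu Suz Szu Szz σ P1 P2 hopt1 hopt2 Mp hMp
end
end

section
/- Let S_hh and S_zz be real symmetric matrices, and let S_hz be a real matrix with S_zh := S_hzᵀ, such that S_hh S_hh⁺ S_hz = S_hz and S_zz S_zz⁺ S_zh = S_zh. Let Θ, Ṽ, K, M be real matrices of compatible sizes satisfying 0 = Θ Ṽ S_hh + Θ K S_zh − M S_hh and 0 = Θ K S_zz + Θ Ṽ S_hz − M S_hz. Then Θ K S_zz (I − S_zz⁺ S_zh S_hh⁺ S_hz) = 0. -/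
/-! Eliminating the first block of the stationarity conditions: right-multiplying the first one
by `S_hh⁺ S_hz` turns `S_hh` into `S_hz`, and subtracting the second leaves
`Θ K S_zz = Θ K S_zh S_hh⁺ S_hz`. On the other hand `S_zz S_zz⁺ S_zh = S_zh` gives
`Θ K S_zz S_zz⁺ S_zh S_hh⁺ S_hz = Θ K S_zh S_hh⁺ S_hz`, and the two agree. -/

open MeasureTheory ProbabilityTheory Matrix Finset

noncomputable section

namespace Matrix

variable {l m n o R : Type*}

theorem mul_mul_mul_eq_of_mul_mul_eq [Fintype m] [Fintype n] [NonUnitalSemiring R]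
    (W : Matrix l m R) {A : Matrix m n R} {P : Matrix n m R} {B : Matrix m o R}
    (hB : A * P * B = B) : W * A * (P * B) = W * B := by
  rw [Matrix.mul_assoc, ← Matrix.mul_assoc A, hB]

theorem mul_eq_mul_mul_of_block_eq_zero [Fintype m] [Fintype n] [Ring R]
    {W : Matrix l m R} {L : Matrix l n R} {A : Matrix m m R} {P : Matrix m m R}
    {B : Matrix m n R} {C : Matrix n m R} {D : Matrix n n R}
    (h₁ : W * A + L * C = 0) (h₂ : L * D + W * B = 0) (hB : A * P * B = B) :
    L * D = L * C * (P * B) := by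
  have h₁' : W * B + L * C * (P * B) = 0 := by
    rw [← mul_mul_mul_eq_of_mul_mul_eq W hB, ← Matrix.add_mul, h₁, Matrix.zero_mul]
  rw [eq_neg_of_add_eq_zero_left h₂, eq_neg_of_add_eq_zero_right h₁']

end Matrix

theorem stmt_14_general {a b h z : Type*} [Fintype b] [Fintype h] [Fintype z] [DecidableEq z]
    (Shh : Matrix h h ℝ)
    (Szz : Matrix z z ℝ)
    (Shz : Matrix h z ℝ) (Szh : Matrix z h ℝ)
    (Shhp : Matrix h h ℝ)
    (Szzp : Matrix z z ℝ)
    (hcolhz : Shh * Shhp * Shz = Shz)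
    (hcolzh : Szz * Szzp * Szh = Szh)
    (Θ : Matrix a b ℝ) (Vt : Matrix b h ℝ) (K : Matrix b z ℝ) (M : Matrix a h ℝ)
    (hopt1 : 0 = Θ * Vt * Shh + Θ * K * Szh - M * Shh)
    (hopt2 : 0 = Θ * K * Szz + Θ * Vt * Shz - M * Shz) :
    Θ * K * Szz * (1 - Szzp * Szh * Shhp * Shz) = 0 := by
  have h₁ : (Θ * Vt - M) * Shh + Θ * K * Szh = 0 := by
    rw [hopt1, Matrix.sub_mul]; abel
  have h₂ : Θ * K * Szz + (Θ * Vt - M) * Shz = 0 := by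
    rw [hopt2, Matrix.sub_mul]; abel
  have hzz : Θ * K * Szz * (Szzp * Szh) = Θ * K * Szh :=
    mul_mul_mul_eq_of_mul_mul_eq (Θ * K) hcolzh
  calc Θ * K * Szz * (1 - Szzp * Szh * Shhp * Shz)
      = Θ * K * Szz - Θ * K * Szz * (Szzp * Szh) * (Shhp * Shz) := by
        simp only [Matrix.mul_sub, Matrix.mul_one, Matrix.mul_assoc]
    _ = 0 := by
        rw [hzz, ← mul_eq_mul_mul_of_block_eq_zero h₁ h₂ hcolhz, sub_self]

/-- From the two (block) first-order optimality conditions one deduces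
`Θ K S_zz (I − S_zz⁺ S_zh S_hh⁺ S_hz) = 0`. -/
theorem stmt_14 {a b h z : Type*} [Fintype a] [Fintype b] [Fintype h] [Fintype z] [DecidableEq h] [DecidableEq z]
    (Shh : Matrix h h ℝ) (hShhSymm : Shh.IsSymm)
    (Szz : Matrix z z ℝ) (hSzzSymm : Szz.IsSymm)
    (Shz : Matrix h z ℝ) (Szh : Matrix z h ℝ) (hSzh : Szh = Shzᵀ)
    (Shhp : Matrix h h ℝ) (hShhp : IsMoorePenrose Shh Shhp)
    (Szzp : Matrix z z ℝ) (hSzzp : IsMoorePenrose Szz Szzp)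
    (hcolhz : Shh * Shhp * Shz = Shz)
    (hcolzh : Szz * Szzp * Szh = Szh)
    (Θ : Matrix a b ℝ) (Vt : Matrix b h ℝ) (K : Matrix b z ℝ) (M : Matrix a h ℝ)
    (hopt1 : 0 = Θ * Vt * Shh + Θ * K * Szh - M * Shh)
    (hopt2 : 0 = Θ * K * Szz + Θ * Vt * Shz - M * Shz) :
    Θ * K * Szz * (1 - Szzp * Szh * Shhp * Shz) = 0 :=
  stmt_14_general Shh Szz Shz Szh Shhp Szzp hcolhz hcolzh Θ Vt K M hopt1 hopt2
end
end

section
/- Let y and z be random vectors with finite second moments, and define Σ_{yy} = E[yyᵀ], Σ_{zz} = E[zzᵀ], Σ_{yz} = E[yzᵀ], Σ_{zy} = Σ_{yz}ᵀ. Then ρ(y,z)² equals the largest eigenvalue of the matrix Σ_{zz}⁺ Σ_{zy} Σ_{yy}⁺ Σ_{yz}. -/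
/-!
Write `A = Σ_yy`, `B = Σ_yz`, `C = Σ_zz` and `N = Bᵀ A⁺ B`. The correlation of the directions
`u, v` is `uᵀBv / √(uᵀAu · vᵀCv)`. Cauchy–Schwarz for the second moments forces the range of `B`
into that of `A`, so `uᵀBv = uᵀA(A⁺Bv)` and Cauchy–Schwarz for the semi-inner product `A` gives
`(uᵀBv)² ≤ uᵀAu · vᵀNv`, with equality at `u = A⁺Bv`. Hence `ρ²` is the maximum `λ` of the
generalized Rayleigh quotient `vᵀNv / vᵀCv`. A maximizer `v₀` exists by compactness; as `λC - N`
is positive semidefinite and its form vanishes at `v₀`, we get `Nv₀ = λCv₀`, so `C⁺Cv₀` is an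
eigenvector of `C⁺N` with eigenvalue `λ`. Conversely every eigenvector of `C⁺N` outside `ker C`
has its eigenvalue as a Rayleigh quotient, and on `ker C` the eigenvalue is `0`.
-/

open MeasureTheory ProbabilityTheory Matrix Finset

noncomputable section

/-- Canonical correlation of two finite-dimensional random vectors. -/
def canonCorr {Ω : Type*} [MeasurableSpace Ω] (μ : Measure Ω)
    {ι κ : Type*} [Fintype ι] [Fintype κ]
    (a : Ω → ι → ℝ) (b : Ω → κ → ℝ) : ℝ :=
  sSup {t : ℝ | ∃ (a' : ι → ℝ) (b' : κ → ℝ),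
    0 < (∫ ω, (a ω ⬝ᵥ a') ^ 2 ∂μ) ∧ 0 < (∫ ω, (b ω ⬝ᵥ b') ^ 2 ∂μ) ∧
    t = (∫ ω, (a ω ⬝ᵥ a') * (b ω ⬝ᵥ b') ∂μ) /
        Real.sqrt ((∫ ω, (a ω ⬝ᵥ a') ^ 2 ∂μ) * (∫ ω, (b ω ⬝ᵥ b') ^ 2 ∂μ))}


namespace IsMoorePenrose

variable {m n : Type*} [Fintype m] [Fintype n]

theorem transpose {A : Matrix m n ℝ} {B : Matrix n m ℝ} (h : IsMoorePenrose A B) :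
    IsMoorePenrose Aᵀ Bᵀ := by
  obtain ⟨h1, h2, h3, h4⟩ := h
  refine ⟨?_, ?_, ?_, ?_⟩
  · rw [← transpose_mul, ← transpose_mul, ← Matrix.mul_assoc, h1]
  · rw [← transpose_mul, ← transpose_mul, ← Matrix.mul_assoc, h2]
  · rw [← transpose_mul, transpose_transpose, h4]
  · rw [← transpose_mul, transpose_transpose, h3]

theorem unique {A : Matrix m n ℝ} {B C : Matrix n m ℝ}
    (hB : IsMoorePenrose A B) (hC : IsMoorePenrose A C) : B = C := by
  obtain ⟨hB1, hB2, hB3, hB4⟩ := hB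
  obtain ⟨hC1, hC2, hC3, hC4⟩ := hC
  have hAB : A * B = A * C :=
    calc A * B = (A * C * A) * B := by rw [hC1]
    _ = (A * C)ᵀ * (A * B)ᵀ := by rw [hC3, hB3, Matrix.mul_assoc]
    _ = (A * B * A * C)ᵀ := by simp only [transpose_mul, Matrix.mul_assoc]
    _ = A * C := by rw [hB1, hC3]
  have hBA : B * A = C * A :=
    calc B * A = B * (A * C * A) := by rw [hC1]
    _ = (B * A)ᵀ * (C * A)ᵀ := by rw [hB4, hC4, Matrix.mul_assoc, Matrix.mul_assoc]
    _ = (C * (A * B * A))ᵀ := by simp only [transpose_mul, Matrix.mul_assoc]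
    _ = C * A := by rw [hB1, hC4]
  calc B = B * A * B := hB2.symm
  _ = C * A * C := by rw [hBA, Matrix.mul_assoc, hAB, ← Matrix.mul_assoc]
  _ = C := hC2

theorem transpose_eq_self {A B : Matrix n n ℝ} (h : IsMoorePenrose A B) (hA : Aᵀ = A) :
    Bᵀ = B :=
  (hA ▸ h.transpose).unique h

end IsMoorePenrose

theorem Matrix.dotProduct_mulVec_comm {n : Type*} [Fintype n] {M : Matrix n n ℝ} (hM : Mᵀ = M)
    (x y : n → ℝ) : x ⬝ᵥ M *ᵥ y = y ⬝ᵥ M *ᵥ x := by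
  conv_lhs => rw [← hM]
  exact dotProduct_transpose_mulVec M x y

namespace Matrix.PosSemidef

variable {n : Type*} {M : Matrix n n ℝ}

theorem transpose_eq_self (hM : M.PosSemidef) : Mᵀ = M := by
  simpa using hM.isHermitian.eq

variable [Fintype n]

theorem dotProduct_mulVec_self_nonneg (hM : M.PosSemidef) (v : n → ℝ) : 0 ≤ v ⬝ᵥ M *ᵥ v := by
  simpa using hM.dotProduct_mulVec_nonneg v

theorem mulVec_eq_zero_of_dotProduct_mulVec_self (hM : M.PosSemidef) {v : n → ℝ}
    (hv : v ⬝ᵥ M *ᵥ v = 0) : M *ᵥ v = 0 :=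
  (hM.dotProduct_mulVec_zero_iff v).1 (by simpa using hv)

theorem sq_dotProduct_mulVec_le (hM : M.PosSemidef) (x y : n → ℝ) :
    (x ⬝ᵥ M *ᵥ y) ^ 2 ≤ (x ⬝ᵥ M *ᵥ x) * (y ⬝ᵥ M *ᵥ y) := by
  classical
  have h := LinearMap.BilinForm.apply_mul_apply_le_of_forall_zero_le (toLinearMap₂' ℝ M)
    (fun v => by simpa only [toLinearMap₂'_apply'] using hM.dotProduct_mulVec_self_nonneg v) x y
  simp only [toLinearMap₂'_apply'] at h
  rwa [dotProduct_mulVec_comm hM.transpose_eq_self y x, ← sq] at h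

end Matrix.PosSemidef

theorem Real.sSup_eq_of_isGreatest_or_subset_zero {s : Set ℝ} {a : ℝ}
    (h : IsGreatest s a ∨ s ⊆ {0} ∧ a = 0) : sSup s = a := by
  rcases h with ha | ⟨hs, rfl⟩
  · exact ha.csSup_eq
  · rcases Set.subset_singleton_iff_eq.1 hs with rfl | rfl
    · exact Real.sSup_empty
    · exact csSup_singleton 0

theorem mul_pinv_mul_eq_self_of_ker_le {l m n : Type*} [Fintype m] [Fintype n]
    {B : Matrix l n ℝ} {C : Matrix m n ℝ} {Cp : Matrix n m ℝ} (hC : C * Cp * C = C)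
    (hker : ∀ v, C *ᵥ v = 0 → B *ᵥ v = 0) :
    B * (Cp * C) = B := by
  classical
  refine ext_of_mulVec_single fun i => ?_
  have hC0 : C *ᵥ (Pi.single i 1 - (Cp * C) *ᵥ Pi.single i 1) = 0 := by
    rw [mulVec_sub, mulVec_mulVec, ← Matrix.mul_assoc, hC, sub_self]
  have := hker _ hC0
  rwa [mulVec_sub, mulVec_mulVec, sub_eq_zero, eq_comm] at this

section GeneralizedRayleigh

variable {κ : Type*} [Fintype κ] {C Cp N : Matrix κ κ ℝ}

/-- `lam` is the maximum of `0` and of the generalized Rayleigh quotients `vᵀNv / vᵀCv`,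
`vᵀCv > 0`. -/
def IsGenRayleighMax (N C : Matrix κ κ ℝ) (lam : ℝ) : Prop :=
  0 ≤ lam ∧ (∀ v, v ⬝ᵥ N *ᵥ v ≤ lam * (v ⬝ᵥ C *ᵥ v)) ∧
    (lam = 0 ∨ ∃ v, 0 < v ⬝ᵥ C *ᵥ v ∧ v ⬝ᵥ N *ᵥ v = lam * (v ⬝ᵥ C *ᵥ v))

theorem smul_dotProduct_mulVec_smul (M : Matrix κ κ ℝ) (c : ℝ) (v : κ → ℝ) :
    (c • v) ⬝ᵥ M *ᵥ (c • v) = c ^ 2 * (v ⬝ᵥ M *ᵥ v) := by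
  simp only [mulVec_smul, dotProduct_smul, smul_dotProduct, smul_eq_mul]
  ring

theorem mulVec_dotProduct_mulVec_of_mul_eq {M P : Matrix κ κ ℝ} (hM : Mᵀ = M) (hMP : M * P = M)
    (v : κ → ℝ) : (P *ᵥ v) ⬝ᵥ M *ᵥ (P *ᵥ v) = v ⬝ᵥ M *ᵥ v := by
  rw [mulVec_mulVec, hMP, dotProduct_comm, dotProduct_mulVec, vecMul_mulVec, hM, hMP,
    ← dotProduct_mulVec]

theorem exists_forall_ratio_le (hC : C.PosSemidef) (hCp : IsMoorePenrose C Cp) (hN : Nᵀ = N)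
    (hker : ∀ v, C *ᵥ v = 0 → N *ᵥ v = 0) (h : ∃ v, 0 < v ⬝ᵥ C *ᵥ v) :
    ∃ v₀, 0 < v₀ ⬝ᵥ C *ᵥ v₀ ∧ ∀ v, 0 < v ⬝ᵥ C *ᵥ v →
      v ⬝ᵥ N *ᵥ v / v ⬝ᵥ C *ᵥ v ≤ v₀ ⬝ᵥ N *ᵥ v₀ / v₀ ⬝ᵥ C *ᵥ v₀ := by
  set P := Cp * C
  set ratio : (κ → ℝ) → ℝ := fun v => v ⬝ᵥ N *ᵥ v / v ⬝ᵥ C *ᵥ v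
  -- the ratio is invariant under `v ↦ P v` and under scaling, so it suffices to maximize it on
  -- the compact set of unit vectors fixed by `P`
  set D := {w | P *ᵥ w = w} ∩ Metric.sphere 0 1
  have hD : IsCompact D :=
    (isCompact_sphere 0 1).inter_left (isClosed_eq (by fun_prop) (by fun_prop))
  have hpos : ∀ w ∈ D, 0 < w ⬝ᵥ C *ᵥ w := by
    rintro w ⟨hPw, hw⟩
    refine (hC.dotProduct_mulVec_self_nonneg w).lt_of_ne fun h0 => ?_
    have : w = 0 := by
      rw [← hPw, ← mulVec_mulVec, hC.mulVec_eq_zero_of_dotProduct_mulVec_self h0.symm, mulVec_zero]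
    simp [this] at hw
  have hrep : ∀ v, 0 < v ⬝ᵥ C *ᵥ v → ∃ w ∈ D, ratio w = ratio v := by
    intro v hv
    have hCP : C * P = C := by rw [← Matrix.mul_assoc]; exact hCp.1
    have hNP : N * P = N := mul_pinv_mul_eq_self_of_ker_le hCp.1 hker
    have hPP : P * P = P := by simp only [P, ← Matrix.mul_assoc, hCp.2.1]
    have hPv : P *ᵥ v ≠ 0 := fun h0 => by
      rw [← mulVec_dotProduct_mulVec_of_mul_eq hC.transpose_eq_self hCP, h0] at hv
      simp at hv
    refine ⟨‖P *ᵥ v‖⁻¹ • P *ᵥ v, ⟨?_, ?_⟩, ?_⟩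
    · rw [Set.mem_ofPred_eq, mulVec_smul, mulVec_mulVec, hPP]
    · rw [mem_sphere_zero_iff_norm, norm_smul, norm_inv, norm_norm,
        inv_mul_cancel₀ (norm_ne_zero_iff.2 hPv)]
    · simp only [ratio, smul_dotProduct_mulVec_smul]
      rw [mul_div_mul_left _ _ (by simpa using hPv),
        mulVec_dotProduct_mulVec_of_mul_eq hN hNP,
        mulVec_dotProduct_mulVec_of_mul_eq hC.transpose_eq_self hCP]
  obtain ⟨v, hv⟩ := h
  obtain ⟨w, hwD, -⟩ := hrep v hv
  have hcont : ContinuousOn ratio D :=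
    ContinuousOn.div (by fun_prop) (by fun_prop) fun w hw => (hpos w hw).ne'
  obtain ⟨w₀, hw₀, hmax⟩ := hD.exists_isMaxOn ⟨w, hwD⟩ hcont
  refine ⟨w₀, hpos w₀ hw₀, fun v hv => ?_⟩
  obtain ⟨w, hwD, hw⟩ := hrep v hv
  exact hw.symm.le.trans (hmax hwD)

theorem exists_isGenRayleighMax (hC : C.PosSemidef) (hCp : IsMoorePenrose C Cp)
    (hN : N.PosSemidef) (hker : ∀ v, C *ᵥ v = 0 → N *ᵥ v = 0) :
    ∃ lam, IsGenRayleighMax N C lam := by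
  by_cases h : ∃ v, 0 < v ⬝ᵥ C *ᵥ v
  · obtain ⟨v₀, hv₀, hmax⟩ := exists_forall_ratio_le hC hCp hN.transpose_eq_self hker h
    refine ⟨v₀ ⬝ᵥ N *ᵥ v₀ / v₀ ⬝ᵥ C *ᵥ v₀,
      div_nonneg (hN.dotProduct_mulVec_self_nonneg v₀) hv₀.le, fun v => ?_,
      Or.inr ⟨v₀, hv₀, (div_mul_cancel₀ _ hv₀.ne').symm⟩⟩
    rcases (hC.dotProduct_mulVec_self_nonneg v).lt_or_eq with hv | hv
    · exact (div_le_iff₀ hv).1 (hmax v hv)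
    · rw [← hv, hker v (hC.mulVec_eq_zero_of_dotProduct_mulVec_self hv.symm), dotProduct_zero,
        mul_zero]
  · push Not at h
    refine ⟨0, le_rfl, fun v => ?_, Or.inl rfl⟩
    have hCv := hC.mulVec_eq_zero_of_dotProduct_mulVec_self
      (le_antisymm (h v) (hC.dotProduct_mulVec_self_nonneg v))
    rw [hker v hCv, dotProduct_zero, zero_mul]

theorem IsGenRayleighMax.sSup_eigenvalues {lam : ℝ} (hlam : IsGenRayleighMax N C lam)
    (hC : C.PosSemidef) (hCp : IsMoorePenrose C Cp) (hN : N.PosSemidef)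
    (hker : ∀ v, C *ᵥ v = 0 → N *ᵥ v = 0) :
    sSup {t : ℝ | ∃ v : κ → ℝ, v ≠ 0 ∧ (Cp * N) *ᵥ v = t • v} = lam := by
  obtain ⟨hlam0, hle, hatt⟩ := hlam
  have hNP : N * (Cp * C) = N := mul_pinv_mul_eq_self_of_ker_le hCp.1 hker
  have hCN : C * Cp * N = N := by
    simpa [transpose_mul, hC.transpose_eq_self, hN.transpose_eq_self,
      hCp.transpose_eq_self hC.transpose_eq_self, Matrix.mul_assoc] using congrArg transpose hNP
  have hbound : ∀ t ∈ {t : ℝ | ∃ v : κ → ℝ, v ≠ 0 ∧ (Cp * N) *ᵥ v = t • v}, 0 ≤ t ∧ t ≤ lam := by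
    rintro t ⟨v, hv0, hv⟩
    rcases (hC.dotProduct_mulVec_self_nonneg v).lt_or_eq with hpos | hzero
    · have hq : v ⬝ᵥ N *ᵥ v = t * (v ⬝ᵥ C *ᵥ v) := by
        rw [← hCN, Matrix.mul_assoc, ← mulVec_mulVec, hv, mulVec_smul,
          dotProduct_smul, smul_eq_mul]
      exact ⟨nonneg_of_mul_nonneg_left (hq ▸ hN.dotProduct_mulVec_self_nonneg v) hpos,
        le_of_mul_le_mul_right (hq ▸ hle v) hpos⟩
    · have : t • v = 0 := by
        rw [← hv, ← mulVec_mulVec,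
          hker v (hC.mulVec_eq_zero_of_dotProduct_mulVec_self hzero.symm), mulVec_zero]
      obtain rfl := (smul_eq_zero.1 this).resolve_right hv0
      exact ⟨le_rfl, hlam0⟩
  apply Real.sSup_eq_of_isGreatest_or_subset_zero
  rcases hatt with rfl | ⟨v₀, hv₀, heq⟩
  · exact Or.inr ⟨fun t ht => le_antisymm (hbound t ht).2 (hbound t ht).1, rfl⟩
  refine Or.inl ⟨⟨(Cp * C) *ᵥ v₀, fun h0 => ?_, ?_⟩, fun t ht => (hbound t ht).2⟩
  · have : C *ᵥ v₀ = 0 := by rw [← hCp.1, Matrix.mul_assoc, ← mulVec_mulVec, h0, mulVec_zero]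
    simp [this] at hv₀
  · -- `lam • C - N` is positive semidefinite and its form vanishes at `v₀`
    have hM : (lam • C - N).PosSemidef := by
      refine PosSemidef.of_dotProduct_mulVec_nonneg ?_ fun v => ?_
      · exact (hC.isHermitian.smul (IsSelfAdjoint.all lam)).sub hN.isHermitian
      · simpa [sub_mulVec, smul_mulVec] using hle v
    have hNv₀ : N *ᵥ v₀ = lam • C *ᵥ v₀ := by
      have := hM.mulVec_eq_zero_of_dotProduct_mulVec_self (v := v₀)
        (by simp [sub_mulVec, smul_mulVec, heq])
      rwa [sub_mulVec, smul_mulVec, sub_eq_zero, eq_comm] at this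
    rw [mulVec_mulVec, Matrix.mul_assoc, hNP, ← mulVec_mulVec, hNv₀, mulVec_smul, mulVec_mulVec]

end GeneralizedRayleigh

section CanonicalCorrelation

variable {ι κ : Type*} [Fintype ι] [Fintype κ] {A Ap : Matrix ι ι ℝ} {C Cp : Matrix κ κ ℝ}
  {B : Matrix ι κ ℝ}

theorem mulVec_eq_zero_of_sq_dotProduct_le
    (hB : ∀ u v, (u ⬝ᵥ B *ᵥ v) ^ 2 ≤ (u ⬝ᵥ A *ᵥ u) * (v ⬝ᵥ C *ᵥ v)) {v : κ → ℝ}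
    (hv : C *ᵥ v = 0) : B *ᵥ v = 0 := by
  have h := hB (B *ᵥ v) v
  rw [hv, dotProduct_zero, mul_zero] at h
  exact dotProduct_self_eq_zero.1 (pow_eq_zero_iff two_ne_zero |>.1 (le_antisymm h (sq_nonneg _)))

theorem mul_pinv_mul_eq_self_of_sq_dotProduct_le (hA : A.PosSemidef) (hAp : IsMoorePenrose A Ap)
    (hB : ∀ u v, (u ⬝ᵥ B *ᵥ v) ^ 2 ≤ (u ⬝ᵥ A *ᵥ u) * (v ⬝ᵥ C *ᵥ v)) : A * (Ap * B) = B := by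
  have hBt : Bᵀ * (Ap * A) = Bᵀ := by
    refine mul_pinv_mul_eq_self_of_ker_le hAp.1 fun u hu => ?_
    refine mulVec_eq_zero_of_sq_dotProduct_le (A := C) (C := A) (fun v u => ?_) hu
    rw [dotProduct_transpose_mulVec, mul_comm]
    exact hB u v
  simpa [transpose_mul, hA.transpose_eq_self, hAp.transpose_eq_self hA.transpose_eq_self,
    Matrix.mul_assoc] using congrArg transpose hBt

variable (hA : A.PosSemidef) (hAp : IsMoorePenrose A Ap)
  (hB : ∀ u v, (u ⬝ᵥ B *ᵥ v) ^ 2 ≤ (u ⬝ᵥ A *ᵥ u) * (v ⬝ᵥ C *ᵥ v))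
include hA hAp hB

theorem transpose_mul_pinv_mul_eq :
    Bᵀ * Ap * B = (Ap * B)ᵀ * A * (Ap * B) := by
  rw [Matrix.mul_assoc _ A, mul_pinv_mul_eq_self_of_sq_dotProduct_le hA hAp hB, transpose_mul,
    hAp.transpose_eq_self hA.transpose_eq_self]

theorem posSemidef_transpose_mul_pinv_mul : (Bᵀ * Ap * B).PosSemidef := by
  rw [transpose_mul_pinv_mul_eq hA hAp hB, ← conjTranspose_eq_transpose_of_trivial]
  exact hA.conjTranspose_mul_mul_same _

theorem dotProduct_mulVec_transpose_mul_pinv_mul (v : κ → ℝ) :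
    v ⬝ᵥ (Bᵀ * Ap * B) *ᵥ v = ((Ap * B) *ᵥ v) ⬝ᵥ A *ᵥ ((Ap * B) *ᵥ v) := by
  rw [transpose_mul_pinv_mul_eq hA hAp hB, ← mulVec_mulVec, ← mulVec_mulVec,
    dotProduct_transpose_mulVec, dotProduct_comm]

theorem sq_dotProduct_le_mul_transpose_mul_pinv_mul (u : ι → ℝ) (v : κ → ℝ) :
    (u ⬝ᵥ B *ᵥ v) ^ 2 ≤ (u ⬝ᵥ A *ᵥ u) * (v ⬝ᵥ (Bᵀ * Ap * B) *ᵥ v) := by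
  rw [dotProduct_mulVec_transpose_mul_pinv_mul hA hAp hB]
  conv_lhs => rw [← mul_pinv_mul_eq_self_of_sq_dotProduct_le hA hAp hB, ← mulVec_mulVec]
  exact hA.sq_dotProduct_mulVec_le u _

theorem IsGenRayleighMax.sSup_corr {lam : ℝ} (hlam : IsGenRayleighMax (Bᵀ * Ap * B) C lam) :
    sSup {t : ℝ | ∃ u v, 0 < u ⬝ᵥ A *ᵥ u ∧ 0 < v ⬝ᵥ C *ᵥ v ∧
      t = (u ⬝ᵥ B *ᵥ v) / √((u ⬝ᵥ A *ᵥ u) * (v ⬝ᵥ C *ᵥ v))} = √lam := by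
  obtain ⟨hlam0, hle, hatt⟩ := hlam
  have hsq : ∀ s ∈ {t : ℝ | ∃ u v, 0 < u ⬝ᵥ A *ᵥ u ∧ 0 < v ⬝ᵥ C *ᵥ v ∧
      t = (u ⬝ᵥ B *ᵥ v) / √((u ⬝ᵥ A *ᵥ u) * (v ⬝ᵥ C *ᵥ v))}, s ^ 2 ≤ lam := by
    rintro s ⟨u, v, hu, hv, rfl⟩
    rw [div_pow, Real.sq_sqrt (mul_pos hu hv).le, div_le_iff₀ (mul_pos hu hv)]
    calc (u ⬝ᵥ B *ᵥ v) ^ 2 ≤ (u ⬝ᵥ A *ᵥ u) * (v ⬝ᵥ (Bᵀ * Ap * B) *ᵥ v) :=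
          sq_dotProduct_le_mul_transpose_mul_pinv_mul hA hAp hB u v
      _ ≤ (u ⬝ᵥ A *ᵥ u) * (lam * (v ⬝ᵥ C *ᵥ v)) := mul_le_mul_of_nonneg_left (hle v) hu.le
      _ = lam * ((u ⬝ᵥ A *ᵥ u) * (v ⬝ᵥ C *ᵥ v)) := by ring
  apply Real.sSup_eq_of_isGreatest_or_subset_zero
  rcases eq_or_ne lam 0 with rfl | hlam
  · refine Or.inr ⟨fun s hs => ?_, Real.sqrt_zero⟩
    exact pow_eq_zero_iff two_ne_zero |>.1 (le_antisymm (hsq s hs) (sq_nonneg s))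
  obtain ⟨v, hv, heq⟩ := hatt.resolve_left hlam
  -- the optimal `u` for a given `v` is `A⁺ B v`
  have hAu : ((Ap * B) *ᵥ v) ⬝ᵥ A *ᵥ ((Ap * B) *ᵥ v) = lam * (v ⬝ᵥ C *ᵥ v) := by
    rw [← dotProduct_mulVec_transpose_mul_pinv_mul hA hAp hB, heq]
  have hBu : ((Ap * B) *ᵥ v) ⬝ᵥ B *ᵥ v = lam * (v ⬝ᵥ C *ᵥ v) := by
    rw [← hAu, mulVec_mulVec, mul_pinv_mul_eq_self_of_sq_dotProduct_le hA hAp hB]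
  have hpos : 0 < lam * (v ⬝ᵥ C *ᵥ v) := mul_pos (hlam0.lt_of_ne' hlam) hv
  refine Or.inl ⟨⟨(Ap * B) *ᵥ v, v, hAu ▸ hpos, hv, ?_⟩,
    fun s hs => (le_abs_self s).trans (Real.abs_le_sqrt (hsq s hs))⟩
  rw [hAu, hBu, eq_div_iff (by positivity), ← Real.sqrt_mul hlam0,
    show lam * (lam * (v ⬝ᵥ C *ᵥ v) * (v ⬝ᵥ C *ᵥ v)) = (lam * (v ⬝ᵥ C *ᵥ v)) ^ 2 by ring,
    Real.sqrt_sq hpos.le]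

end CanonicalCorrelation

theorem sSup_sq_eq_sSup_eigenvalues {ι κ : Type*} [Fintype ι] [Fintype κ]
    {A Ap : Matrix ι ι ℝ} {C Cp : Matrix κ κ ℝ} {B : Matrix ι κ ℝ}
    (hA : A.PosSemidef) (hC : C.PosSemidef)
    (hB : ∀ u v, (u ⬝ᵥ B *ᵥ v) ^ 2 ≤ (u ⬝ᵥ A *ᵥ u) * (v ⬝ᵥ C *ᵥ v))
    (hAp : IsMoorePenrose A Ap) (hCp : IsMoorePenrose C Cp) :
    sSup {t : ℝ | ∃ u v, 0 < u ⬝ᵥ A *ᵥ u ∧ 0 < v ⬝ᵥ C *ᵥ v ∧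
        t = (u ⬝ᵥ B *ᵥ v) / √((u ⬝ᵥ A *ᵥ u) * (v ⬝ᵥ C *ᵥ v))} ^ 2 =
      sSup {t : ℝ | ∃ v : κ → ℝ, v ≠ 0 ∧ (Cp * Bᵀ * Ap * B) *ᵥ v = t • v} := by
  have hN := posSemidef_transpose_mul_pinv_mul hA hAp hB
  have hker : ∀ v, C *ᵥ v = 0 → (Bᵀ * Ap * B) *ᵥ v = 0 := fun v hv => by
    rw [← mulVec_mulVec, mulVec_eq_zero_of_sq_dotProduct_le hB hv, mulVec_zero]
  obtain ⟨lam, hlam⟩ := exists_isGenRayleighMax hC hCp hN hker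
  rw [show Cp * Bᵀ * Ap * B = Cp * (Bᵀ * Ap * B) by simp only [Matrix.mul_assoc],
    hlam.sSup_eigenvalues hC hCp hN hker, hlam.sSup_corr hA hAp hB, Real.sq_sqrt hlam.1]

section SecondMoments

variable {Ω : Type*} [MeasurableSpace Ω] {μ : Measure Ω} {ι κ : Type*} [Fintype ι] [Fintype κ]

def crossMoment (μ : Measure Ω) (f : Ω → ι → ℝ) (g : Ω → κ → ℝ) : Matrix ι κ ℝ :=
  Matrix.of fun i j => ∫ ω, f ω i * g ω j ∂μ

theorem sq_integral_mul_le {f g : Ω → ℝ} (hf : MemLp f 2 μ) (hg : MemLp g 2 μ) :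
    (∫ ω, f ω * g ω ∂μ) ^ 2 ≤ (∫ ω, f ω ^ 2 ∂μ) * ∫ ω, g ω ^ 2 ∂μ := by
  have hf2 := hf.integrable_sq
  have hg2 := hg.integrable_sq
  have hfg : Integrable (fun ω => f ω * g ω) μ := hf.integrable_mul hg
  have hquad : ∀ t : ℝ, 0 ≤ (∫ ω, g ω ^ 2 ∂μ) * (t * t) + (2 * ∫ ω, f ω * g ω ∂μ) * t +
      ∫ ω, f ω ^ 2 ∂μ := fun t =>
    calc 0 ≤ ∫ ω, (f ω + t * g ω) ^ 2 ∂μ := integral_nonneg fun ω => sq_nonneg _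
      _ = ∫ ω, (g ω ^ 2 * (t * t) + 2 * (f ω * g ω) * t) + f ω ^ 2 ∂μ :=
          integral_congr_ae (ae_of_all _ fun ω => by ring)
      _ = _ := by
          have hlin : Integrable (fun ω => g ω ^ 2 * (t * t) + 2 * (f ω * g ω) * t) μ :=
            (hg2.mul_const _).add ((hfg.const_mul 2).mul_const t)
          rw [integral_add hlin hf2,
            integral_add (hg2.mul_const _) ((hfg.const_mul 2).mul_const t), integral_mul_const,
            integral_mul_const, integral_const_mul]
  have := discrim_le_zero hquad
  rw [discrim] at this
  nlinarith

theorem memLp_two_dotProduct {f : Ω → ι → ℝ} (hf : AEStronglyMeasurable f μ)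
    (hf2 : Integrable (fun ω => f ω ⬝ᵥ f ω) μ) (u : ι → ℝ) :
    MemLp (fun ω => f ω ⬝ᵥ u) 2 μ := by
  refine (memLp_two_iff_integrable_sq (by fun_prop)).2 <|
    (hf2.mul_const (u ⬝ᵥ u)).mono' (by fun_prop) (ae_of_all _ fun ω => ?_)
  rw [Real.norm_eq_abs, abs_of_nonneg (sq_nonneg _)]
  simpa only [dotProduct, sq] using Finset.sum_mul_sq_le_sq_mul_sq univ (f ω) u

variable {f : Ω → ι → ℝ} {g : Ω → κ → ℝ}

theorem integral_dotProduct_mul_dotProduct (hf : ∀ u, MemLp (fun ω => f ω ⬝ᵥ u) 2 μ)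
    (hg : ∀ v, MemLp (fun ω => g ω ⬝ᵥ v) 2 μ) (u : ι → ℝ) (v : κ → ℝ) :
    ∫ ω, (f ω ⬝ᵥ u) * (g ω ⬝ᵥ v) ∂μ = u ⬝ᵥ crossMoment μ f g *ᵥ v := by
  classical
  have hint : ∀ i j, Integrable (fun ω => u i * (f ω i * g ω j) * v j) μ := fun i j => by
    have := (hf (Pi.single i 1)).integrable_mul (hg (Pi.single j 1))
    simp only [dotProduct_single_one] at this
    exact (this.const_mul (u i)).mul_const (v j)
  calc ∫ ω, (f ω ⬝ᵥ u) * (g ω ⬝ᵥ v) ∂μ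
      = ∫ ω, ∑ i, ∑ j, u i * (f ω i * g ω j) * v j ∂μ := by
        congr with ω
        simp only [dotProduct, sum_mul_sum]
        exact sum_congr rfl fun i _ => sum_congr rfl fun j _ => by ring
    _ = ∑ i, ∑ j, u i * (∫ ω, f ω i * g ω j ∂μ) * v j := by
        rw [integral_finsetSum _ fun i _ => integrable_finsetSum _ fun j _ => hint i j]
        refine sum_congr rfl fun i _ => ?_
        rw [integral_finsetSum _ fun j _ => hint i j]
        simp only [integral_mul_const, integral_const_mul]
    _ = u ⬝ᵥ crossMoment μ f g *ᵥ v := by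
        simp only [dotProduct, mulVec, crossMoment, of_apply, mul_sum]
        exact sum_congr rfl fun i _ => sum_congr rfl fun j _ => by ring

theorem integral_dotProduct_sq (hf : ∀ u, MemLp (fun ω => f ω ⬝ᵥ u) 2 μ) (u : ι → ℝ) :
    ∫ ω, (f ω ⬝ᵥ u) ^ 2 ∂μ = u ⬝ᵥ crossMoment μ f f *ᵥ u := by
  simp only [sq]
  exact integral_dotProduct_mul_dotProduct hf hf u u

theorem posSemidef_crossMoment (hf : ∀ u, MemLp (fun ω => f ω ⬝ᵥ u) 2 μ) :
    (crossMoment μ f f).PosSemidef := by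
  refine PosSemidef.of_dotProduct_mulVec_nonneg ?_ fun u => ?_
  · ext i j
    simp only [crossMoment, conjTranspose_apply, of_apply, star_trivial, mul_comm]
  · simpa [← integral_dotProduct_sq hf] using integral_nonneg fun ω => sq_nonneg (f ω ⬝ᵥ u)

theorem sq_dotProduct_crossMoment_le (hf : ∀ u, MemLp (fun ω => f ω ⬝ᵥ u) 2 μ)
    (hg : ∀ v, MemLp (fun ω => g ω ⬝ᵥ v) 2 μ) (u : ι → ℝ) (v : κ → ℝ) :
    (u ⬝ᵥ crossMoment μ f g *ᵥ v) ^ 2 ≤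
      (u ⬝ᵥ crossMoment μ f f *ᵥ u) * (v ⬝ᵥ crossMoment μ g g *ᵥ v) := by
  rw [← integral_dotProduct_mul_dotProduct hf hg, ← integral_dotProduct_sq hf,
    ← integral_dotProduct_sq hg]
  exact sq_integral_mul_le (hf u) (hg v)

theorem canonCorr_eq_sSup (hf : ∀ u, MemLp (fun ω => f ω ⬝ᵥ u) 2 μ)
    (hg : ∀ v, MemLp (fun ω => g ω ⬝ᵥ v) 2 μ) :
    canonCorr μ f g = sSup {t : ℝ | ∃ u v, 0 < u ⬝ᵥ crossMoment μ f f *ᵥ u ∧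
      0 < v ⬝ᵥ crossMoment μ g g *ᵥ v ∧ t = (u ⬝ᵥ crossMoment μ f g *ᵥ v) /
        √((u ⬝ᵥ crossMoment μ f f *ᵥ u) * (v ⬝ᵥ crossMoment μ g g *ᵥ v))} := by
  simp only [canonCorr, integral_dotProduct_sq hf, integral_dotProduct_sq hg,
    integral_dotProduct_mul_dotProduct hf hg]

end SecondMoments

theorem stmt_16_general {Ω : Type*} [MeasurableSpace Ω] (μ : Measure Ω)
    {ι κ : Type*} [Fintype ι] [Fintype κ]
    (y : Ω → ι → ℝ) (z : Ω → κ → ℝ)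
    (hy : Measurable y) (hz : Measurable z)
    (hyL2 : Integrable (fun ω => y ω ⬝ᵥ y ω) μ)
    (hzL2 : Integrable (fun ω => z ω ⬝ᵥ z ω) μ)
    (Syy : Matrix ι ι ℝ) (hSyy : Syy = Matrix.of fun i j => ∫ ω, y ω i * y ω j ∂μ)
    (Szz : Matrix κ κ ℝ) (hSzz : Szz = Matrix.of fun i j => ∫ ω, z ω i * z ω j ∂μ)
    (Syz : Matrix ι κ ℝ) (hSyz : Syz = Matrix.of fun i j => ∫ ω, y ω i * z ω j ∂μ)
    (Szy : Matrix κ ι ℝ) (hSzy : Szy = Syzᵀ)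
    (Syyp : Matrix ι ι ℝ) (hSyyp : IsMoorePenrose Syy Syyp)
    (Szzp : Matrix κ κ ℝ) (hSzzp : IsMoorePenrose Szz Szzp) :
    canonCorr μ y z ^ 2 =
      sSup {t : ℝ | ∃ v : κ → ℝ, v ≠ 0 ∧ (Szzp * Szy * Syyp * Syz).mulVec v = t • v} := by
  subst hSyy hSzz hSyz hSzy
  have hy2 := memLp_two_dotProduct hy.aestronglyMeasurable hyL2
  have hz2 := memLp_two_dotProduct hz.aestronglyMeasurable hzL2
  rw [canonCorr_eq_sSup hy2 hz2]
  exact sSup_sq_eq_sSup_eigenvalues (posSemidef_crossMoment hy2) (posSemidef_crossMoment hz2)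
    (sq_dotProduct_crossMoment_le hy2 hz2) hSyyp hSzzp

/-- `ρ(y,z)²` equals the largest eigenvalue of `Σ_zz⁺ Σ_zy Σ_yy⁺ Σ_yz`. -/
theorem stmt_16 {Ω : Type*} [MeasurableSpace Ω] (μ : Measure Ω) [IsProbabilityMeasure μ]
    {ι κ : Type*} [Fintype ι] [Fintype κ]
    (y : Ω → ι → ℝ) (z : Ω → κ → ℝ)
    (hy : Measurable y) (hz : Measurable z)
    (hyL2 : Integrable (fun ω => y ω ⬝ᵥ y ω) μ)
    (hzL2 : Integrable (fun ω => z ω ⬝ᵥ z ω) μ)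
    (Syy : Matrix ι ι ℝ) (hSyy : Syy = Matrix.of fun i j => ∫ ω, y ω i * y ω j ∂μ)
    (Szz : Matrix κ κ ℝ) (hSzz : Szz = Matrix.of fun i j => ∫ ω, z ω i * z ω j ∂μ)
    (Syz : Matrix ι κ ℝ) (hSyz : Syz = Matrix.of fun i j => ∫ ω, y ω i * z ω j ∂μ)
    (Szy : Matrix κ ι ℝ) (hSzy : Szy = Syzᵀ)
    (Syyp : Matrix ι ι ℝ) (hSyyp : IsMoorePenrose Syy Syyp)
    (Szzp : Matrix κ κ ℝ) (hSzzp : IsMoorePenrose Szz Szzp) :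
    canonCorr μ y z ^ 2 =
      sSup {t : ℝ | ∃ v : κ → ℝ, v ≠ 0 ∧ (Szzp * Szy * Syyp * Syz).mulVec v = t • v} :=
  stmt_16_general μ y z hy hz hyL2 hzL2 Syy hSyy Szz hSzz Syz hSyz Szy hSzy Syyp hSyyp Szzp hSzzp
end
end
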